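/- arXiv:1105.4684 — 5 statements merged into one kernel-verified Lean document; each statement's English description precedes it below -/
import Mathlib

section
/- Let γ' be an arc in a proper domain G' of a real Banach space with endpoints x' and y', and let z₀' ∈ γ' be a point maximizing d_{G'} over γ'. Suppose there is a constant c₂ ≥ 1 such that min{diam(γ'[x',w']), diam(γ'[y',w'])} ≤ c₂·d_{G'}(w') for every w' ∈ γ'. Then for every z' ∈ γ'[x', z₀'], diam(γ'[x', z']) ≤ 2c₂·d_{G'}(z₀'). -/
open Set Metric

section Defs

variable {E : Type*} [NormedAddCommGroup E] [NormedSpace ℝ E]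
variable {E' : Type*} [NormedAddCommGroup E'] [NormedSpace ℝ E']

/-- Distance from a point to the boundary of `D`. -/
noncomputable def bdDist (D : Set E) (z : E) : ℝ := Metric.infDist z (frontier D)

/-- `γ` (with derivative `γ'`) is a rectifiable curve in `D` from `x` to `y`,
parametrized on `[0,1]`. -/
def IsCurve (D : Set E) (γ γ' : ℝ → E) (x y : E) : Prop :=
  (∀ t ∈ Icc (0:ℝ) 1, γ t ∈ D) ∧ (∀ t ∈ Icc (0:ℝ) 1, HasDerivAt γ (γ' t) t) ∧
    ContinuousOn γ' (Icc 0 1) ∧ γ 0 = x ∧ γ 1 = y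

/-- Arclength of a curve between parameter values `a` and `b`. -/
noncomputable def clen (γ' : ℝ → E) (a b : ℝ) : ℝ := ∫ t in a..b, ‖γ' t‖

/-- Quasihyperbolic length of a curve between parameter values `a` and `b`. -/
noncomputable def qhLen (D : Set E) (γ γ' : ℝ → E) (a b : ℝ) : ℝ :=
  ∫ t in a..b, ‖γ' t‖ / bdDist D (γ t)

/-- The quasihyperbolic distance in `D`. -/
noncomputable def qhDist (D : Set E) (x y : E) : ℝ :=
  sInf {l : ℝ | ∃ γ γ' : ℝ → E, IsCurve D γ γ' x y ∧ l = qhLen D γ γ' 0 1}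

/-- `γ` is a `ν`-neargeodesic from `x` to `y` in `D`. -/
def IsNeargeodesic (ν : ℝ) (D : Set E) (γ γ' : ℝ → E) (x y : E) : Prop :=
  IsCurve D γ γ' x y ∧ ∀ s t : ℝ, 0 ≤ s → s ≤ t → t ≤ 1 →
    qhLen D γ γ' s t ≤ ν * qhDist D (γ s) (γ t)

/-- `D` is a `c`-uniform domain: any two points are joined by a double `c`-cone arc. -/
def IsUniform (c : ℝ) (D : Set E) : Prop :=
  ∀ x ∈ D, ∀ y ∈ D, ∃ γ γ' : ℝ → E, IsCurve D γ γ' x y ∧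
    (∀ t ∈ Icc (0:ℝ) 1, min (clen γ' 0 t) (clen γ' t 1) ≤ c * bdDist D (γ t)) ∧
    clen γ' 0 1 ≤ c * ‖x - y‖

/-- `f` is `C`-coarsely `M`-quasihyperbolic from `D` to `D'`. -/
def IsCQH (M C : ℝ) (D : Set E) (D' : Set E') (f : E → E') : Prop :=
  ∀ x ∈ D, ∀ y ∈ D,
    (qhDist D x y - C) / M ≤ qhDist D' (f x) (f y) ∧
      qhDist D' (f x) (f y) ≤ M * qhDist D x y + C

/-- `f` is a homeomorphism of `S` onto `S'`. -/
def IsHomeoOn (f : E → E') (S : Set E) (S' : Set E') : Prop :=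
  ContinuousOn f S ∧ InjOn f S ∧ f '' S = S' ∧
    ∃ g : E' → E, ContinuousOn g S' ∧ ∀ x ∈ S, g (f x) = x

/-- The cross ratio of a quadruple. -/
noncomputable def crossRatio (a b c d : E) : ℝ :=
  (dist a b / dist a c) * (dist c d / dist b d)

/-- `F` is `η`-quasimöbius relative to `∂D` (on the closure of `D`). -/
def IsQMRelBoundary (η : ℝ → ℝ) (D : Set E) (F : E → E') : Prop :=
  ∀ a b c d : E, a ∈ closure D → b ∈ closure D → c ∈ closure D → d ∈ closure D →
    a ≠ b → a ≠ c → a ≠ d → b ≠ c → b ≠ d → c ≠ d →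
    ((a ∈ frontier D ∧ d ∈ frontier D) ∨ (b ∈ frontier D ∧ c ∈ frontier D)) →
    crossRatio (F a) (F b) (F c) (F d) ≤ η (crossRatio a b c d)

/-- `η` is a self-homeomorphism of `[0,∞)` (a distortion gauge). -/
def IsGauge (η : ℝ → ℝ) : Prop :=
  StrictMonoOn η (Ici 0) ∧ ContinuousOn η (Ici 0) ∧ η 0 = 0 ∧ SurjOn η (Ici 0) (Ici 0)

end Defs


/-!
Split `γ[x', z']` at a point `w'` where the tail `γ[w', z']` has exactly half the diameter of
`γ[x', z']` (intermediate value theorem: the diameter of `γ[w, s]` depends continuously on `w`).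
Then both `γ[x', w']` and `γ[w', y'] ⊇ γ[w', z']` have diameter at least `diam γ[x', z'] / 2`,
so the cone condition at `w'` and the maximality of `d_{G'}(z₀')` give
`diam γ[x', z'] / 2 ≤ c₂ d_{G'}(w') ≤ c₂ d_{G'}(z₀')`.
-/

section ArcDiameter

variable {α : Type*} [PseudoMetricSpace α] {γ : ℝ → α} {a b : ℝ}

theorem diam_image_Icc_le_add (γ : ℝ → α) {u v w : ℝ} (huv : u ≤ v) (hvw : v ≤ w) :
    diam (γ '' Icc u w) ≤ diam (γ '' Icc u v) + diam (γ '' Icc v w) := by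
  rw [← Icc_union_Icc_eq_Icc huv hvw, image_union]
  exact diam_union' ⟨γ v, mem_image_of_mem γ ⟨huv, le_rfl⟩, mem_image_of_mem γ ⟨le_rfl, hvw⟩⟩

theorem ContinuousOn.diam_image_le_of_subset (hγ : ContinuousOn γ (Icc a b)) {s : Set ℝ}
    (hs : s ⊆ Icc a b) : diam (γ '' s) ≤ diam (γ '' Icc a b) :=
  diam_mono (image_mono hs) (isCompact_Icc.image_of_continuousOn hγ).isBounded

theorem ContinuousOn.dist_diam_image_Icc_le (hγ : ContinuousOn γ (Icc a b)) {v : ℝ}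
    (hav : a ≤ v) (hvb : v ≤ b) :
    dist (diam (γ '' Icc a b)) (diam (γ '' Icc v b)) ≤ diam (γ '' Icc a v) := by
  rw [Real.dist_eq, abs_of_nonneg (sub_nonneg.2 (hγ.diam_image_le_of_subset
    (Icc_subset_Icc_left hav)))]
  linarith [diam_image_Icc_le_add γ hav hvb]

theorem ContinuousOn.exists_diam_image_Icc_le (hγ : ContinuousOn γ (Icc a b)) {ε : ℝ}
    (hε : 0 < ε) : ∃ δ > 0, ∀ u ∈ Icc a b, ∀ v ∈ Icc a b, dist u v < δ →
      diam (γ '' Icc u v) ≤ ε := by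
  obtain ⟨δ, hδ, hγδ⟩ := Metric.uniformContinuousOn_iff.1
    (isCompact_Icc.uniformContinuousOn_of_continuous hγ) ε hε
  refine ⟨δ, hδ, fun u hu v hv huv => diam_le_of_forall_dist_le hε.le ?_⟩
  rintro _ ⟨p, hp, rfl⟩ _ ⟨q, hq, rfl⟩
  have hsub : Icc u v ⊆ Icc a b := Icc_subset_Icc hu.1 hv.2
  refine (hγδ p (hsub hp) q (hsub hq) ?_).le
  calc dist p q ≤ v - u := Real.dist_le_of_mem_Icc hp hq
    _ ≤ dist u v := by rw [dist_comm]; exact le_abs_self _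
    _ < δ := huv

theorem ContinuousOn.continuousOn_diam_image_Icc (hγ : ContinuousOn γ (Icc a b)) :
    ContinuousOn (fun w => diam (γ '' Icc w b)) (Icc a b) := by
  refine Metric.continuousOn_iff.2 fun x hx ε hε => ?_
  obtain ⟨δ, hδ, hsmall⟩ := hγ.exists_diam_image_Icc_le (half_pos hε)
  have hclose : ∀ u ∈ Icc a b, ∀ v ∈ Icc a b, u ≤ v → dist u v < δ →
      dist (diam (γ '' Icc u b)) (diam (γ '' Icc v b)) < ε := fun u hu v hv huv huvδ =>
    calc _ ≤ diam (γ '' Icc u v) :=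
          (hγ.mono (Icc_subset_Icc_left hu.1)).dist_diam_image_Icc_le huv hv.2
      _ ≤ ε / 2 := hsmall u hu v hv huvδ
      _ < ε := half_lt_self hε
  refine ⟨δ, hδ, fun y hy hyx => ?_⟩
  rcases le_total y x with hle | hle
  · exact hclose y hy x hx hle hyx
  · rw [dist_comm] at hyx ⊢
    exact hclose x hx y hy hle hyx

theorem ContinuousOn.exists_diam_image_Icc_eq_half (hγ : ContinuousOn γ (Icc a b))
    (hab : a ≤ b) : ∃ w ∈ Icc a b, diam (γ '' Icc w b) = diam (γ '' Icc a b) / 2 ∧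
      diam (γ '' Icc a b) / 2 ≤ diam (γ '' Icc a w) := by
  have hhalf : diam (γ '' Icc a b) / 2 ∈
      Icc (diam (γ '' Icc b b)) (diam (γ '' Icc a b)) := by
    rw [Icc_self, image_singleton, diam_singleton]
    exact ⟨div_nonneg diam_nonneg zero_le_two, half_le_self diam_nonneg⟩
  obtain ⟨w, hw, hwb⟩ := intermediate_value_Icc' hab hγ.continuousOn_diam_image_Icc hhalf
  refine ⟨w, hw, hwb, ?_⟩
  linarith [diam_image_Icc_le_add γ hw.1 hw.2]

end ArcDiameter

theorem stmt5_general {E : Type*} [NormedAddCommGroup E]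
    (G' : Set E)
    (γ : ℝ → E) (hcont : ContinuousOn γ (Icc 0 1))
    (t₀ : ℝ) (ht₀ : t₀ ∈ Icc (0:ℝ) 1)
    (hmax : ∀ t ∈ Icc (0:ℝ) 1, bdDist G' (γ t) ≤ bdDist G' (γ t₀))
    (c₂ : ℝ) (hc₂ : 1 ≤ c₂)
    (hcone : ∀ w ∈ Icc (0:ℝ) 1,
      min (Metric.diam (γ '' Icc 0 w)) (Metric.diam (γ '' Icc w 1)) ≤ c₂ * bdDist G' (γ w)) :
    ∀ s ∈ Icc (0:ℝ) t₀, Metric.diam (γ '' Icc 0 s) ≤ 2 * c₂ * bdDist G' (γ t₀) := by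
  rintro s ⟨hs0, hst⟩
  have hs1 : s ≤ 1 := hst.trans ht₀.2
  obtain ⟨w, ⟨hw0, hws⟩, hw_tail, hw_head⟩ :=
    (hcont.mono (Icc_subset_Icc_right hs1)).exists_diam_image_Icc_eq_half hs0
  have hw1 : w ∈ Icc (0:ℝ) 1 := ⟨hw0, hws.trans hs1⟩
  have hw_tail_le : diam (γ '' Icc 0 s) / 2 ≤ diam (γ '' Icc w 1) :=
    hw_tail ▸ (hcont.mono (Icc_subset_Icc_left hw0)).diam_image_le_of_subset
      (Icc_subset_Icc_right hs1)
  calc diam (γ '' Icc 0 s) = 2 * (diam (γ '' Icc 0 s) / 2) := by ring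
    _ ≤ 2 * min (diam (γ '' Icc 0 w)) (diam (γ '' Icc w 1)) := by
      gcongr; exact le_min hw_head hw_tail_le
    _ ≤ 2 * (c₂ * bdDist G' (γ w)) := by gcongr; exact hcone w hw1
    _ ≤ 2 * (c₂ * bdDist G' (γ t₀)) := by
      have : 0 ≤ c₂ := zero_le_one.trans hc₂
      gcongr
      exact hmax w hw1
    _ = 2 * c₂ * bdDist G' (γ t₀) := (mul_assoc _ _ _).symm

/-- Claim 2.10: for an arc `γ` in a proper domain `G'` with endpoints `x'`, `y'`
satisfying the cone-type diameter estimate with constant `c₂`, and `z₀' = γ(t₀)` maximizing the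
distance to the boundary over `γ`, every point `z' = γ(s)` of `γ[x', z₀']` satisfies
`diam(γ[x', z']) ≤ 2c₂·d_{G'}(z₀')`. -/
theorem stmt5 {E : Type*} [NormedAddCommGroup E] [NormedSpace ℝ E] [CompleteSpace E]
    (G' : Set E) (hGopen : IsOpen G') (hGconn : IsConnected G') (hGproper : G' ≠ univ)
    (γ : ℝ → E) (hcont : ContinuousOn γ (Icc 0 1)) (hinj : InjOn γ (Icc 0 1))
    (hmem : ∀ t ∈ Icc (0:ℝ) 1, γ t ∈ G')
    (x' y' : E) (hx : γ 0 = x') (hy : γ 1 = y')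
    (t₀ : ℝ) (ht₀ : t₀ ∈ Icc (0:ℝ) 1)
    (hmax : ∀ t ∈ Icc (0:ℝ) 1, bdDist G' (γ t) ≤ bdDist G' (γ t₀))
    (c₂ : ℝ) (hc₂ : 1 ≤ c₂)
    (hcone : ∀ w ∈ Icc (0:ℝ) 1,
      min (Metric.diam (γ '' Icc 0 w)) (Metric.diam (γ '' Icc w 1)) ≤ c₂ * bdDist G' (γ w)) :
    ∀ s ∈ Icc (0:ℝ) t₀, Metric.diam (γ '' Icc 0 s) ≤ 2 * c₂ * bdDist G' (γ t₀) :=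
  stmt5_general G' γ hcont t₀ ht₀ hmax c₂ hc₂ hcone
end

section
/- Let γ' be an arc in a proper domain G' with endpoints x', y', let z₀' ∈ γ' maximize d_{G'} over γ', and assume the cone-type estimate min{diam(γ'[x',w']), diam(γ'[y',w'])} ≤ c₂·d_{G'}(w') for all w' ∈ γ' with constant c₂ ≥ 1. Then for every z' ∈ γ'[x', z₀'] one has |x' − z'| ≤ 4c₂²·d_{G'}(z'), and symmetrically for every z' ∈ γ'[y', z₀'] one has |y' − z'| ≤ 4c₂²·d_{G'}(z'). -/
open Set Metric

/-!
On the subarc from the start to the peak point `γ t₀`, the cone condition gives at every point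
either a small initial piece or a small final piece. At the infimum of the parameters with a
small final piece, by continuity both pieces are at most `c · d(γ t₀)`, so the initial subarc
up to `γ t₀` has diameter at most `2c · d(γ t₀)`. If a point `γ s` has a small final piece, that
piece contains `γ t₀`, so `d(γ t₀) ≤ d(γ s) + c · d(γ s) ≤ 2c · d(γ s)`, which gives `4c²`.
-/

section ArcDiam

variable {X : Type*} [PseudoMetricSpace X] {γ : ℝ → X} {a b : ℝ}

lemma isBounded_image_Icc_of_le (hγ : ContinuousOn γ (Icc a b)) {c d : ℝ} (hc : a ≤ c)
    (hd : d ≤ b) : Bornology.IsBounded (γ '' Icc c d) :=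
  (isCompact_Icc.image_of_continuousOn (hγ.mono (Icc_subset_Icc hc hd))).isBounded

lemma diam_image_Icc_le_of_forall_dist_le (hγ : ContinuousOn γ (Icc a b)) {D : ℝ} (hD : 0 ≤ D)
    (h : ∀ u ∈ Ioo a b, ∀ v ∈ Ioo a b, dist (γ u) (γ v) ≤ D) : diam (γ '' Icc a b) ≤ D := by
  rcases lt_or_ge a b with hab | hba
  · have hsub : γ '' Icc a b ⊆ closure (γ '' Ioo a b) := by
      rw [← closure_Ioo hab.ne] at hγ ⊢
      exact hγ.image_closure
    have hbdd : Bornology.IsBounded (closure (γ '' Ioo a b)) :=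
      ((isBounded_image_Icc_of_le hγ le_rfl le_rfl).subset
        (image_mono Ioo_subset_Icc_self)).closure
    calc diam (γ '' Icc a b) ≤ diam (closure (γ '' Ioo a b)) := diam_mono hsub hbdd
      _ = diam (γ '' Ioo a b) := diam_closure _
      _ ≤ D := diam_le_of_forall_dist_le hD <| by
        rintro _ ⟨u, hu, rfl⟩ _ ⟨v, hv, rfl⟩
        exact h u hu v hv
  · rw [diam_subsingleton ((subsingleton_Icc_of_ge hba).image γ)]
    exact hD

lemma diam_image_Icc_le_two_mul (hγ : ContinuousOn γ (Icc a b)) {t D : ℝ} (ht : t ∈ Icc a b)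
    (hD : 0 ≤ D) (h : ∀ w ∈ Icc a t, min (diam (γ '' Icc a w)) (diam (γ '' Icc w b)) ≤ D) :
    diam (γ '' Icc a t) ≤ 2 * D := by
  set B := {w ∈ Icc a t | diam (γ '' Icc w b) ≤ D}
  rcases B.eq_empty_or_nonempty with hB | hB
  · have htB : t ∉ B := hB ▸ notMem_empty t
    have hleft := (min_le_iff.mp (h t ⟨ht.1, le_rfl⟩)).resolve_right
      fun hle => htB ⟨⟨ht.1, le_rfl⟩, hle⟩
    linarith
  have hBbdd : BddBelow B := ⟨a, fun w hw => hw.1.1⟩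
  set w₀ := sInf B
  have haw : a ≤ w₀ := le_csInf hB fun w hw => hw.1.1
  have hwt : w₀ ≤ t := let ⟨_, hw⟩ := hB; (csInf_le hBbdd hw).trans hw.1.2
  have hwb : w₀ ≤ b := hwt.trans ht.2
  have hleft : diam (γ '' Icc a w₀) ≤ D := by
    refine diam_image_Icc_le_of_forall_dist_le (hγ.mono (Icc_subset_Icc_right hwb)) hD ?_
    intro u hu v hv
    have hw : max u v ∈ Icc a t :=
      ⟨hu.1.le.trans (le_max_left _ _), (max_lt hu.2 hv.2).le.trans hwt⟩
    have hwB : max u v ∉ B := fun hB' => (csInf_le hBbdd hB').not_gt (max_lt hu.2 hv.2)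
    have hdiam := (min_le_iff.mp (h _ hw)).resolve_right fun hle => hwB ⟨hw, hle⟩
    exact (dist_le_diam_of_mem (isBounded_image_Icc_of_le hγ le_rfl (hw.2.trans ht.2))
      (mem_image_of_mem γ ⟨hu.1.le, le_max_left _ _⟩)
      (mem_image_of_mem γ ⟨hv.1.le, le_max_right _ _⟩)).trans hdiam
  have hright : diam (γ '' Icc w₀ b) ≤ D := by
    refine diam_image_Icc_le_of_forall_dist_le (hγ.mono (Icc_subset_Icc_left haw)) hD ?_
    intro u hu v hv
    obtain ⟨w, hwB, hwlt⟩ := exists_lt_of_csInf_lt hB (lt_min hu.1 hv.1)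
    exact (dist_le_diam_of_mem (isBounded_image_Icc_of_le hγ hwB.1.1 le_rfl)
      (mem_image_of_mem γ ⟨hwlt.le.trans (min_le_left _ _), hu.2.le⟩)
      (mem_image_of_mem γ ⟨hwlt.le.trans (min_le_right _ _), hv.2.le⟩)).trans hwB.2
  have hsub : γ '' Icc a t ⊆ γ '' Icc a w₀ ∪ γ '' Icc w₀ b := by
    rintro _ ⟨s, hs, rfl⟩
    rcases le_total s w₀ with hsw | hws
    · exact Or.inl (mem_image_of_mem γ ⟨hs.1, hsw⟩)
    · exact Or.inr (mem_image_of_mem γ ⟨hws, hs.2.trans ht.2⟩)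
  calc diam (γ '' Icc a t) ≤ diam (γ '' Icc a w₀ ∪ γ '' Icc w₀ b) :=
        diam_mono hsub ((isBounded_image_Icc_of_le hγ le_rfl hwb).union
          (isBounded_image_Icc_of_le hγ haw le_rfl))
    _ ≤ diam (γ '' Icc a w₀) + diam (γ '' Icc w₀ b) :=
        diam_union' ⟨γ w₀, mem_image_of_mem γ ⟨haw, le_rfl⟩, mem_image_of_mem γ ⟨le_rfl, hwb⟩⟩
    _ ≤ 2 * D := by linarith

lemma dist_left_le_four_mul_sq_infDist {S : Set X} (hγ : ContinuousOn γ (Icc a b)) {t₀ : ℝ}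
    (ht₀ : t₀ ∈ Icc a b) (hmax : ∀ t ∈ Icc a b, infDist (γ t) S ≤ infDist (γ t₀) S)
    {c : ℝ} (hc : 1 ≤ c)
    (hcone : ∀ w ∈ Icc a b,
      min (diam (γ '' Icc a w)) (diam (γ '' Icc w b)) ≤ c * infDist (γ w) S) :
    ∀ s ∈ Icc a t₀, dist (γ a) (γ s) ≤ 4 * c ^ 2 * infDist (γ s) S := by
  intro s hs
  have hsb : s ≤ b := hs.2.trans ht₀.2
  have hds : 0 ≤ infDist (γ s) S := infDist_nonneg
  rcases min_le_iff.mp (hcone s ⟨hs.1, hsb⟩) with hleft | hright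
  · calc dist (γ a) (γ s) ≤ diam (γ '' Icc a s) :=
          dist_le_diam_of_mem (isBounded_image_Icc_of_le hγ le_rfl hsb)
            (mem_image_of_mem γ ⟨le_rfl, hs.1⟩) (mem_image_of_mem γ ⟨hs.1, le_rfl⟩)
      _ ≤ c * infDist (γ s) S := hleft
      _ ≤ 4 * c ^ 2 * infDist (γ s) S := by gcongr; nlinarith
  · have hdiam : diam (γ '' Icc a t₀) ≤ 2 * (c * infDist (γ t₀) S) := by
      refine diam_image_Icc_le_two_mul hγ ht₀ 
        (mul_nonneg (by linarith) infDist_nonneg) ?_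
      intro w hw
      have hwab : w ∈ Icc a b := ⟨hw.1, hw.2.trans ht₀.2⟩
      exact (hcone w hwab).trans (by gcongr; exact hmax w hwab)
    have hpeak : infDist (γ t₀) S ≤ 2 * c * infDist (γ s) S := calc
      infDist (γ t₀) S ≤ infDist (γ s) S + dist (γ t₀) (γ s) := infDist_le_infDist_add_dist
      _ ≤ infDist (γ s) S + diam (γ '' Icc s b) := by
        gcongr
        exact dist_le_diam_of_mem (isBounded_image_Icc_of_le hγ hs.1 le_rfl)
          (mem_image_of_mem γ ⟨hs.2, ht₀.2⟩) (mem_image_of_mem γ ⟨le_rfl, hsb⟩)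
      _ ≤ 2 * c * infDist (γ s) S := by nlinarith
    calc dist (γ a) (γ s) ≤ diam (γ '' Icc a t₀) :=
          dist_le_diam_of_mem (isBounded_image_Icc_of_le hγ le_rfl ht₀.2)
            (mem_image_of_mem γ ⟨le_rfl, ht₀.1⟩) (mem_image_of_mem γ hs)
      _ ≤ 2 * (c * infDist (γ t₀) S) := hdiam
      _ ≤ 2 * (c * (2 * c * infDist (γ s) S)) := by gcongr
      _ = 4 * c ^ 2 * infDist (γ s) S := by ring

lemma dist_right_le_four_mul_sq_infDist {S : Set X} (hγ : ContinuousOn γ (Icc a b)) {t₀ : ℝ}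
    (ht₀ : t₀ ∈ Icc a b) (hmax : ∀ t ∈ Icc a b, infDist (γ t) S ≤ infDist (γ t₀) S)
    {c : ℝ} (hc : 1 ≤ c)
    (hcone : ∀ w ∈ Icc a b,
      min (diam (γ '' Icc a w)) (diam (γ '' Icc w b)) ≤ c * infDist (γ w) S) :
    ∀ s ∈ Icc t₀ b, dist (γ b) (γ s) ≤ 4 * c ^ 2 * infDist (γ s) S := by
  set δ : ℝ → X := fun t => γ (a + b - t)
  have hrefl : ∀ t ∈ Icc a b, a + b - t ∈ Icc a b := fun t ht =>
    ⟨by linarith [ht.2], by linarith [ht.1]⟩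
  have himage : ∀ p q : ℝ, δ '' Icc p q = γ '' Icc (a + b - q) (a + b - p) := fun p q => by
    rw [show δ = γ ∘ (a + b - ·) from rfl, image_comp, image_const_sub_Icc]
  have hδ : ContinuousOn δ (Icc a b) := hγ.comp (by fun_prop) hrefl
  have hleft := dist_left_le_four_mul_sq_infDist hδ (hrefl t₀ ht₀)
    (fun t ht => by simpa [δ] using hmax _ (hrefl t ht)) hc
    (fun w hw => by
      rw [himage, himage, add_sub_cancel_right, add_sub_cancel_left, min_comm]
      exact hcone _ (hrefl w hw))
  intro s hs
  simpa [δ] using hleft (a + b - s) ⟨by linarith [hs.2], by linarith [hs.1]⟩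

end ArcDiam

theorem stmt6_general {E : Type*} [NormedAddCommGroup E] [NormedSpace ℝ E]
    (G' : Set E)
    (γ : ℝ → E) (hcont : ContinuousOn γ (Icc 0 1))
    (x' y' : E) (hx : γ 0 = x') (hy : γ 1 = y')
    (t₀ : ℝ) (ht₀ : t₀ ∈ Icc (0:ℝ) 1)
    (hmax : ∀ t ∈ Icc (0:ℝ) 1, bdDist G' (γ t) ≤ bdDist G' (γ t₀))
    (c₂ : ℝ) (hc₂ : 1 ≤ c₂)
    (hcone : ∀ w ∈ Icc (0:ℝ) 1,
      min (Metric.diam (γ '' Icc 0 w)) (Metric.diam (γ '' Icc w 1)) ≤ c₂ * bdDist G' (γ w)) :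
    (∀ s ∈ Icc (0:ℝ) t₀, dist x' (γ s) ≤ 4 * c₂ ^ 2 * bdDist G' (γ s)) ∧
    (∀ s ∈ Icc t₀ (1:ℝ), dist y' (γ s) ≤ 4 * c₂ ^ 2 * bdDist G' (γ s)) := by
  subst hx hy
  exact ⟨dist_left_le_four_mul_sq_infDist hcont ht₀ hmax hc₂ hcone,
    dist_right_le_four_mul_sq_infDist hcont ht₀ hmax hc₂ hcone⟩

/-- Lemma 2.11(1): for an arc `γ` in a proper domain `G'` with endpoints
`x' = γ(0)`, `y' = γ(1)` satisfying the cone-type diameter estimate with constant `c₂ ≥ 1`, and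
`z₀' = γ(t₀)` maximizing the distance to the boundary over `γ`: every `z' = γ(s)` with
`s ∈ [0, t₀]` satisfies `|x' - z'| ≤ 4c₂²·d_{G'}(z')`, and every `z' = γ(s)` with
`s ∈ [t₀, 1]` satisfies `|y' - z'| ≤ 4c₂²·d_{G'}(z')`. -/
theorem stmt6 {E : Type*} [NormedAddCommGroup E] [NormedSpace ℝ E] [CompleteSpace E]
    (G' : Set E) (hGopen : IsOpen G') (hGconn : IsConnected G') (hGproper : G' ≠ univ)
    (γ : ℝ → E) (hcont : ContinuousOn γ (Icc 0 1)) (hinj : InjOn γ (Icc 0 1))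
    (hmem : ∀ t ∈ Icc (0:ℝ) 1, γ t ∈ G')
    (x' y' : E) (hx : γ 0 = x') (hy : γ 1 = y')
    (t₀ : ℝ) (ht₀ : t₀ ∈ Icc (0:ℝ) 1)
    (hmax : ∀ t ∈ Icc (0:ℝ) 1, bdDist G' (γ t) ≤ bdDist G' (γ t₀))
    (c₂ : ℝ) (hc₂ : 1 ≤ c₂)
    (hcone : ∀ w ∈ Icc (0:ℝ) 1,
      min (Metric.diam (γ '' Icc 0 w)) (Metric.diam (γ '' Icc w 1)) ≤ c₂ * bdDist G' (γ w)) :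
    (∀ s ∈ Icc (0:ℝ) t₀, dist x' (γ s) ≤ 4 * c₂ ^ 2 * bdDist G' (γ s)) ∧
    (∀ s ∈ Icc t₀ (1:ℝ), dist y' (γ s) ≤ 4 * c₂ ^ 2 * bdDist G' (γ s)) :=
  stmt6_general G' γ hcont x' y' hx hy t₀ ht₀ hmax c₂ hc₂ hcone
end

section
/- Let D' be a proper domain in a real Banach space and γ' an arc with endpoints z₁', z₂' subdivided by successive points x₁' = z₁', x₂', …, x_{m+2}' along γ'. Suppose there exist constants μ₄, μ₅ ≥ 1 such that (a) for each i and each y' ∈ γ'[x_i', x_{i+1}'], d_{D'}(x_i') ≤ 2μ₄·d_{D'}(y'); (b) for each i, ℓ(γ'[x_i', x_{i+1}']) ≤ μ₅·d_{D'}(x_i'); and (c) d_{D'}(x_{i+1}') = 2·d_{D'}(x_i') for i ≤ m. Then for every z' ∈ γ'[z₁', x_{m+2}'], ℓ(γ'[z₁', z']) ≤ 4μ₄μ₅·d_{D'}(z'). -/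
open Set Metric

/-- a telescoping cone-arc estimate. If an arc `γ` from `z₁'` (at parameter
`t 1 = 0`) is subdivided by successive parameters `t 1 ≤ t 2 ≤ ⋯ ≤ t (m+2)` with properties
(a) `d_{D'}(x_i') ≤ 2μ₄ d_{D'}(y')` for `y'` on `γ[x_i', x_{i+1}']`,
(b) `ℓ(γ[x_i', x_{i+1}']) ≤ μ₅ d_{D'}(x_i')` and
(c) `d_{D'}(x_{i+1}') = 2 d_{D'}(x_i')` for `i ≤ m`,
then `ℓ(γ[z₁', z']) ≤ 4μ₄μ₅ d_{D'}(z')` for all `z'` on `γ[z₁', x_{m+2}']`. -/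
theorem stmt7 {E : Type*} [NormedAddCommGroup E] [NormedSpace ℝ E] [CompleteSpace E]
    (D' : Set E) (hDopen : IsOpen D') (hDconn : IsConnected D') (hDproper : D' ≠ univ)
    (z₁' z₂' : E) (γ γ' : ℝ → E) (hγ : IsCurve D' γ γ' z₁' z₂')
    (m : ℕ) (t : ℕ → ℝ) (ht1 : t 1 = 0)
    (htmono : ∀ i : ℕ, 1 ≤ i → i ≤ m + 1 → t i ≤ t (i + 1))
    (htub : t (m + 2) ≤ 1)
    (μ₄ μ₅ : ℝ) (hμ₄ : 1 ≤ μ₄) (hμ₅ : 1 ≤ μ₅)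
    (ha : ∀ i : ℕ, 1 ≤ i → i ≤ m + 1 → ∀ u ∈ Icc (t i) (t (i + 1)),
      bdDist D' (γ (t i)) ≤ 2 * μ₄ * bdDist D' (γ u))
    (hb : ∀ i : ℕ, 1 ≤ i → i ≤ m + 1 →
      clen γ' (t i) (t (i + 1)) ≤ μ₅ * bdDist D' (γ (t i)))
    (hc : ∀ i : ℕ, 1 ≤ i → i ≤ m →
      bdDist D' (γ (t (i + 1))) = 2 * bdDist D' (γ (t i))) :
    ∀ s ∈ Icc (0:ℝ) (t (m + 2)), clen γ' 0 s ≤ 4 * μ₄ * μ₅ * bdDist D' (γ s) := by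
  intro s hs
  have hnorm : ContinuousOn (fun u => ‖γ' u‖) (Icc 0 1) := hγ.2.2.1.norm
  have hd0 : ∀ x : E, 0 ≤ bdDist D' x := fun x => Metric.infDist_nonneg
  -- monotonicity of t on [1, m+2]
  have htle : ∀ i j : ℕ, 1 ≤ i → i ≤ j → j ≤ m + 2 → t i ≤ t j := by
    intro i j hi hij
    induction j, hij using Nat.le_induction with
    | base => intro _; exact le_rfl
    | succ j hj ih =>
      intro hjm
      exact le_trans (ih (by omega)) (htmono j (by omega) (by omega))
  have htmem : ∀ k : ℕ, 1 ≤ k → k ≤ m + 2 → t k ∈ Icc (0:ℝ) 1 := by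
    intro k h1 h2
    constructor
    · rw [← ht1]; exact htle 1 k le_rfl h1 h2
    · exact le_trans (htle k (m + 2) h1 h2 le_rfl) htub
  have h0mem : (0:ℝ) ∈ Icc (0:ℝ) 1 := by norm_num
  have hsmem : s ∈ Icc (0:ℝ) 1 :=
    ⟨hs.1, le_trans hs.2 (htmem (m + 2) (by omega) le_rfl).2⟩
  have hint : ∀ a b : ℝ, a ∈ Icc (0:ℝ) 1 → b ∈ Icc (0:ℝ) 1 →
      IntervalIntegrable (fun u => ‖γ' u‖) MeasureTheory.volume a b := by
    intro a b hha hhb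
    exact (hnorm.mono (uIcc_subset_Icc hha hhb)).intervalIntegrable
  -- telescoping claim
  have hclaim : ∀ k : ℕ, 1 ≤ k → k ≤ m + 1 →
      clen γ' 0 (t k) ≤ μ₅ * bdDist D' (γ (t k)) := by
    intro k hk1
    induction k, hk1 using Nat.le_induction with
    | base =>
      intro _
      rw [ht1]
      simp only [clen, intervalIntegral.integral_same]
      exact mul_nonneg (by linarith) (hd0 _)
    | succ k hk ih =>
      intro hk2
      have hck := hc k hk (by omega)
      have hbk := hb k hk (by omega)
      have ihk := ih (by omega)
      have hadd : clen γ' 0 (t (k + 1)) = clen γ' 0 (t k) + clen γ' (t k) (t (k + 1)) := by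
        unfold clen
        rw [intervalIntegral.integral_add_adjacent_intervals
          (hint 0 (t k) h0mem (htmem k (by omega) (by omega)))
          (hint (t k) (t (k + 1)) (htmem k (by omega) (by omega))
            (htmem (k + 1) (by omega) (by omega)))]
      rw [hadd, hck]
      linarith
  -- find the subinterval containing s
  have hfind : ∀ n : ℕ, 1 ≤ n → n ≤ m + 1 → s ≤ t (n + 1) →
      ∃ k, 1 ≤ k ∧ k ≤ n ∧ t k ≤ s ∧ s ≤ t (k + 1) := by
    intro n hn1
    induction n, hn1 using Nat.le_induction with
    | base =>
      intro _ h
      exact ⟨1, le_rfl, le_rfl, by rw [ht1]; exact hs.1, h⟩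
    | succ n hn ih =>
      intro hn2 hsle
      rcases le_or_gt (t (n + 1)) s with h | h
      · exact ⟨n + 1, by omega, le_rfl, h, hsle⟩
      · obtain ⟨k, h1, h2, h3, h4⟩ := ih (by omega) h.le
        exact ⟨k, h1, by omega, h3, h4⟩
  obtain ⟨k, hk1, hk2, hks, hsk⟩ := hfind (m + 1) (by omega) le_rfl hs.2
  have hkmem := htmem k hk1 (by omega)
  have hk1mem := htmem (k + 1) (by omega) (by omega)
  have hadd : clen γ' 0 s = clen γ' 0 (t k) + clen γ' (t k) s := by
    unfold clen
    rw [intervalIntegral.integral_add_adjacent_intervals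
      (hint 0 (t k) h0mem hkmem) (hint (t k) s hkmem hsmem)]
  have h1 := hclaim k hk1 hk2
  have h2 : clen γ' (t k) s ≤ clen γ' (t k) (t (k + 1)) := by
    have hadd2 : clen γ' (t k) (t (k + 1)) = clen γ' (t k) s + clen γ' s (t (k + 1)) := by
      unfold clen
      rw [intervalIntegral.integral_add_adjacent_intervals
        (hint (t k) s hkmem hsmem) (hint s (t (k + 1)) hsmem hk1mem)]
    have hnn : 0 ≤ clen γ' s (t (k + 1)) :=
      intervalIntegral.integral_nonneg hsk (fun u _ => norm_nonneg _)
    linarith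
  have h3 := hb k hk1 hk2
  have h4 := ha k hk1 hk2 s ⟨hks, hsk⟩
  have h5 := hd0 (γ s)
  have h6 := hd0 (γ (t k))
  rw [hadd]
  nlinarith [mul_le_mul_of_nonneg_left h4 (by linarith : (0:ℝ) ≤ μ₅)]
end

section
/- Let D' be a proper domain in a real Banach space and γ' a 2-neargeodesic in D' joining z₁' and z₂' with d_{D'}(z₂') ≥ d_{D'}(z₁'). Suppose ℓ(γ') > μ₇·|z₁' − z₂'| for a constant μ₇ ≥ e^{4M(1 + C)} (with M ≥ 1, C ≥ 0 arbitrary given constants, and assume additionally k_{D'}(z₁',z₂') ≥ (1/2)ℓ_k(γ')). Then d_{D'}(z₂') ≤ 7·|z₁' − z₂'|. -/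
open Set Metric

section AuxLemmas

variable {E : Type*} [NormedAddCommGroup E] [NormedSpace ℝ E]

/-- If a set is open, nonempty and proper, the distance to the boundary is positive inside. -/
lemma aux_bdDist_pos {D : Set E} (hD : IsOpen D) (hproper : D ≠ univ)
    {x : E} (hx : x ∈ D) : 0 < bdDist D x := by
  have hfr : (frontier D).Nonempty := nonempty_frontier_iff.2 ⟨⟨x, hx⟩, hproper⟩
  have hxf : x ∉ frontier D := by
    rw [hD.frontier_eq]
    exact fun h => h.2 hx
  exact (isClosed_frontier.notMem_iff_infDist_pos hfr).1 hxf

/-- Points closer to `x ∈ D` than the boundary distance lie in `D`. -/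
lemma aux_mem_of_dist_lt_bdDist {D : Set E} (hD : IsOpen D) {x y : E} (hx : x ∈ D)
    (h : dist y x < bdDist D x) : y ∈ D := by
  by_contra hy
  set f : ℝ → E := fun t => x + t • (y - x) with hf
  have hfc : Continuous f := by
    exact continuous_const.add (continuous_id.smul continuous_const)
  set T : Set ℝ := Icc 0 1 ∩ f ⁻¹' Dᶜ with hT
  have hTne : T.Nonempty := ⟨1, ⟨by norm_num, by simp [hf, hy]⟩⟩
  have hTc : IsClosed T := isClosed_Icc.inter (hD.isClosed_compl.preimage hfc)
  have hTb : BddBelow T := ⟨0, fun t ht => ht.1.1⟩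
  set t₀ := sInf T with ht₀
  have ht₀T : t₀ ∈ T := hTc.csInf_mem hTne hTb
  have ht₀0 : 0 < t₀ := by
    rcases ht₀T.1.1.lt_or_eq with h0 | h0
    · exact h0
    · exfalso
      apply ht₀T.2
      simp [hf, ← h0, hx]
  have hsub : f '' (Ico 0 t₀) ⊆ D := by
    rintro _ ⟨t, ht, rfl⟩
    by_contra hft
    have htT : t ∈ T := ⟨⟨ht.1, ht.2.le.trans ht₀T.1.2⟩, hft⟩
    exact absurd (csInf_le hTb htT) (not_le.2 ht.2)
  have hcl : f t₀ ∈ closure D := by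
    have h1 : t₀ ∈ closure (Ico (0:ℝ) t₀) := by
      rw [closure_Ico (ne_of_lt ht₀0)]
      exact ⟨ht₀0.le, le_refl _⟩
    have h2 : f t₀ ∈ closure (f '' Ico 0 t₀) :=
      (hfc.continuousWithinAt (s := Ico 0 t₀) (x := t₀)).mem_closure_image h1
    exact closure_mono hsub h2
  have hfr : f t₀ ∈ frontier D := by
    rw [hD.frontier_eq]
    exact ⟨hcl, ht₀T.2⟩
  have hdist : dist x (f t₀) ≤ dist y x := by
    have he : f t₀ - x = t₀ • (y - x) := by simp [hf]
    rw [dist_eq_norm', he, dist_eq_norm, norm_smul, Real.norm_eq_abs,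
      abs_of_pos ht₀0]
    calc t₀ * ‖y - x‖ ≤ 1 * ‖y - x‖ := by
          exact mul_le_mul_of_nonneg_right ht₀T.1.2 (norm_nonneg _)
      _ = ‖y - x‖ := one_mul _
  have hle : bdDist D x ≤ dist x (f t₀) := Metric.infDist_le_dist_of_mem hfr
  linarith

/-- Every quasihyperbolic length is nonnegative, hence `qhDist`'s defining set is
bounded below by `0`. -/
lemma aux_qhLen_nonneg (D : Set E) (γ γ' : ℝ → E) : 0 ≤ qhLen D γ γ' 0 1 :=
  intervalIntegral.integral_nonneg zero_le_one
    (fun _ _ => div_nonneg (norm_nonneg _) Metric.infDist_nonneg)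

lemma aux_qhDist_bddBelow (D : Set E) (x y : E) :
    BddBelow {l : ℝ | ∃ γ γ' : ℝ → E, IsCurve D γ γ' x y ∧ l = qhLen D γ γ' 0 1} := by
  refine ⟨0, ?_⟩
  rintro l ⟨γ, γ', _, rfl⟩
  exact aux_qhLen_nonneg D γ γ'

end AuxLemmas

/-- Claim 3.5: let `γ` be a `2`-neargeodesic in a proper domain `D'` from
`z₁'` to `z₂'` with `d_{D'}(z₂') ≥ d_{D'}(z₁')`. If `ℓ(γ) > μ₇·|z₁' - z₂'|` with
`μ₇ ≥ e^{4M(1+C)}` (where `M ≥ 1`, `C ≥ 0`), and `k_{D'}(z₁',z₂') ≥ (1/2)·ℓ_k(γ)`,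
then `d_{D'}(z₂') ≤ 7·|z₁' - z₂'|`. -/
theorem stmt14 {E : Type*} [NormedAddCommGroup E] [NormedSpace ℝ E] [CompleteSpace E]
    (D' : Set E) (hDopen : IsOpen D') (hDconn : IsConnected D') (hDproper : D' ≠ univ)
    (z₁' z₂' : E) (hz₁ : z₁' ∈ D') (hz₂ : z₂' ∈ D')
    (γ γ' : ℝ → E) (hγ : IsNeargeodesic 2 D' γ γ' z₁' z₂')
    (hd : bdDist D' z₁' ≤ bdDist D' z₂')
    (M C μ₇ : ℝ) (hM : 1 ≤ M) (hC : 0 ≤ C)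
    (hμ₇ : Real.exp (4 * M * (1 + C)) ≤ μ₇)
    (hlen : μ₇ * dist z₁' z₂' < clen γ' 0 1)
    (hk : (1 / 2) * qhLen D' γ γ' 0 1 ≤ qhDist D' z₁' z₂') :
    bdDist D' z₂' ≤ 7 * dist z₁' z₂' := by
  classical
  obtain ⟨⟨hmem, hderiv, hγ'cont, hγ0, hγ1⟩, -⟩ := hγ
  set d₁ := bdDist D' z₁' with hd₁def
  set d₂ := bdDist D' z₂' with hd₂def
  set d := dist z₁' z₂' with hddef
  set L := clen γ' 0 1 with hLdef
  by_contra hcon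
  push_neg at hcon
  have hd0 : 0 ≤ d := dist_nonneg
  have hdlt : d < d₂ := by nlinarith
  have hd₁pos : 0 < d₁ := aux_bdDist_pos hDopen hDproper hz₁
  -- μ₇ ≥ 5
  have hμ5 : (5:ℝ) ≤ μ₇ := by
    have h1 : 4 * M * (1 + C) + 1 ≤ Real.exp (4 * M * (1 + C)) :=
      Real.add_one_le_exp _
    nlinarith
  have h5L : 5 * d < L := lt_of_le_of_lt (by nlinarith) hlen
  have hL0 : 0 < L := by nlinarith
  -- Continuity facts for γ
  have hγcont : ContinuousOn γ (Icc 0 1) :=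
    fun t ht => ((hderiv t ht).continuousAt).continuousWithinAt
  have hbdpos : ∀ t ∈ Icc (0:ℝ) 1, 0 < bdDist D' (γ t) :=
    fun t ht => aux_bdDist_pos hDopen hDproper (hmem t ht)
  have hbdcont : ContinuousOn (fun t => bdDist D' (γ t)) (Icc 0 1) :=
    (Metric.continuous_infDist_pt (frontier D')).comp_continuousOn hγcont
  have hIcont : ContinuousOn (fun t => ‖γ' t‖ / bdDist D' (γ t)) (Icc 0 1) :=
    hγ'cont.norm.div hbdcont (fun t ht => (hbdpos t ht).ne')
  have hnormcont : ContinuousOn (fun t => ‖γ' t‖) (Icc 0 1) := hγ'cont.norm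
  have huIcc : uIcc (0:ℝ) 1 = Icc 0 1 := uIcc_of_le zero_le_one
  have hnormint : IntervalIntegrable (fun t => ‖γ' t‖) MeasureTheory.volume 0 1 :=
    (hnormcont.mono (by rw [huIcc])).intervalIntegrable
  -- arclength bound : dist (γ t) z₁' ≤ L for t ∈ [0,1]
  have harc : ∀ t ∈ Icc (0:ℝ) 1, dist (γ t) z₁' ≤ L := by
    intro t ht
    have hsub : uIcc 0 t ⊆ Icc (0:ℝ) 1 := by
      rw [uIcc_of_le ht.1]
      exact Icc_subset_Icc le_rfl ht.2
    have hsub' : uIcc t 1 ⊆ Icc (0:ℝ) 1 := by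
      rw [uIcc_of_le ht.2]
      exact Icc_subset_Icc ht.1 le_rfl
    have hint1 : IntervalIntegrable γ' MeasureTheory.volume 0 t :=
      (hγ'cont.mono hsub).intervalIntegrable
    have hint1n : IntervalIntegrable (fun t => ‖γ' t‖) MeasureTheory.volume 0 t :=
      ((hγ'cont.norm).mono hsub).intervalIntegrable
    have hint2n : IntervalIntegrable (fun t => ‖γ' t‖) MeasureTheory.volume t 1 :=
      ((hγ'cont.norm).mono hsub').intervalIntegrable
    have hftc : ∫ s in (0:ℝ)..t, γ' s = γ t - γ 0 :=
      intervalIntegral.integral_eq_sub_of_hasDerivAt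
        (fun s hs => hderiv s (hsub hs)) hint1
    have h1 : dist (γ t) z₁' = ‖∫ s in (0:ℝ)..t, γ' s‖ := by
      rw [hftc, ← hγ0, dist_eq_norm]
    have h2 : ‖∫ s in (0:ℝ)..t, γ' s‖ ≤ clen γ' 0 t :=
      intervalIntegral.norm_integral_le_integral_norm ht.1
    have h3 : clen γ' 0 t ≤ L := by
      have hadd : clen γ' 0 t + clen γ' t 1 = L :=
        intervalIntegral.integral_add_adjacent_intervals hint1n hint2n
      have hnn : 0 ≤ clen γ' t 1 :=
        intervalIntegral.integral_nonneg ht.2 (fun _ _ => norm_nonneg _)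
      linarith
    rw [h1]; exact h2.trans h3
  -- lower bound for qhLen γ
  have hlow : L / (d₁ + L) ≤ qhLen D' γ γ' 0 1 := by
    have hptwise : ∀ t ∈ Icc (0:ℝ) 1,
        ‖γ' t‖ / (d₁ + L) ≤ ‖γ' t‖ / bdDist D' (γ t) := by
      intro t ht
      have hub : bdDist D' (γ t) ≤ d₁ + L := by
        have h1 : bdDist D' (γ t) ≤ d₁ + dist (γ t) z₁' :=
          Metric.infDist_le_infDist_add_dist
        linarith [harc t ht]
      exact div_le_div_of_nonneg_left (norm_nonneg _) (hbdpos t ht) hub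
    have hi1 : IntervalIntegrable (fun t => ‖γ' t‖ / (d₁ + L))
        MeasureTheory.volume 0 1 := hnormint.div_const _
    have hi2 : IntervalIntegrable (fun t => ‖γ' t‖ / bdDist D' (γ t))
        MeasureTheory.volume 0 1 := (hIcont.mono (by rw [huIcc])).intervalIntegrable
    have := intervalIntegral.integral_mono_on zero_le_one hi1 hi2 hptwise
    calc L / (d₁ + L) = ∫ t in (0:ℝ)..1, ‖γ' t‖ / (d₁ + L) := by
          rw [intervalIntegral.integral_div]
          rfl
      _ ≤ qhLen D' γ γ' 0 1 := this
  -- upper bound for qhDist via the segment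
  have hup : qhDist D' z₁' z₂' ≤ d / (d₂ - d) := by
    set v := z₂' - z₁' with hv
    set σ : ℝ → E := fun t => z₁' + t • v with hσ
    have hσderiv : ∀ t ∈ Icc (0:ℝ) 1, HasDerivAt σ v t := by
      intro t _
      have h1 : HasDerivAt (fun s : ℝ => s • v) ((1:ℝ) • v) t :=
        (hasDerivAt_id t).smul_const v
      rw [one_smul] at h1
      exact h1.const_add z₁'
    have hσdist : ∀ t ∈ Icc (0:ℝ) 1, dist (σ t) z₂' ≤ d := by
      intro t ht
      have he : σ t - z₂' = (1 - t) • (z₁' - z₂') := by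
        simp only [hσ, hv]
        module
      rw [dist_eq_norm, he, norm_smul, Real.norm_eq_abs,
        abs_of_nonneg (by linarith [ht.2])]
      calc (1 - t) * ‖z₁' - z₂'‖ ≤ 1 * ‖z₁' - z₂'‖ :=
            mul_le_mul_of_nonneg_right (by linarith [ht.1]) (norm_nonneg _)
        _ = d := by rw [one_mul, hddef, dist_eq_norm]
    have hσmem : ∀ t ∈ Icc (0:ℝ) 1, σ t ∈ D' := by
      intro t ht
      exact aux_mem_of_dist_lt_bdDist hDopen hz₂ (lt_of_le_of_lt (hσdist t ht) hdlt)
    have hσbd : ∀ t ∈ Icc (0:ℝ) 1, d₂ - d ≤ bdDist D' (σ t) := by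
      intro t ht
      have h1 : d₂ ≤ bdDist D' (σ t) + dist z₂' (σ t) :=
        Metric.infDist_le_infDist_add_dist
      rw [dist_comm] at h1
      linarith [hσdist t ht]
    have hσcurve : IsCurve D' σ (fun _ => v) z₁' z₂' := by
      refine ⟨hσmem, hσderiv, continuousOn_const, by simp [hσ], by simp [hσ, hv]⟩
    have hσcont : ContinuousOn σ (Icc 0 1) :=
      fun t ht => ((hσderiv t ht).continuousAt).continuousWithinAt
    have hnv : ‖v‖ = d := by rw [hv, hddef, dist_eq_norm, norm_sub_rev]
    have hσlen : qhLen D' σ (fun _ => v) 0 1 ≤ d / (d₂ - d) := by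
      have hptwise : ∀ t ∈ Icc (0:ℝ) 1,
          ‖v‖ / bdDist D' (σ t) ≤ d / (d₂ - d) := by
        intro t ht
        rw [hnv]
        exact div_le_div_of_nonneg_left hd0 (by linarith) (hσbd t ht)
      have hi2 : IntervalIntegrable (fun _ : ℝ => d / (d₂ - d))
          MeasureTheory.volume 0 1 := intervalIntegrable_const
      have hσbdcont : ContinuousOn (fun t => bdDist D' (σ t)) (Icc 0 1) :=
        (Metric.continuous_infDist_pt (frontier D')).comp_continuousOn hσcont
      have hi1 : IntervalIntegrable (fun t => ‖v‖ / bdDist D' (σ t))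
          MeasureTheory.volume 0 1 := by
        apply ContinuousOn.intervalIntegrable
        rw [huIcc]
        exact continuousOn_const.div hσbdcont
          (fun t ht => (lt_of_lt_of_le (by linarith) (hσbd t ht)).ne')
      have := intervalIntegral.integral_mono_on zero_le_one hi1 hi2 hptwise
      calc qhLen D' σ (fun _ => v) 0 1 ≤ ∫ _ in (0:ℝ)..1, d / (d₂ - d) := this
        _ = d / (d₂ - d) := by simp
    have hmemset : qhLen D' σ (fun _ => v) 0 1 ∈
        {l : ℝ | ∃ γ γ' : ℝ → E, IsCurve D' γ γ' z₁' z₂' ∧ l = qhLen D' γ γ' 0 1} :=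
      ⟨σ, fun _ => v, hσcurve, rfl⟩
    exact le_trans (csInf_le (aux_qhDist_bddBelow D' z₁' z₂') hmemset) hσlen
  -- combine
  have hchain : L / (d₁ + L) ≤ 2 * (d / (d₂ - d)) := by
    calc L / (d₁ + L) ≤ qhLen D' γ γ' 0 1 := hlow
      _ = 2 * ((1/2) * qhLen D' γ γ' 0 1) := by ring
      _ ≤ 2 * qhDist D' z₁' z₂' := by linarith
      _ ≤ 2 * (d / (d₂ - d)) := by linarith
  have hkey : L * (d₂ - d) ≤ 2 * d * (d₁ + L) := by
    rw [div_le_iff₀ (by positivity)] at hchain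
    have h2 : 2 * (d / (d₂ - d)) * (d₁ + L) = 2 * d * (d₁ + L) / (d₂ - d) := by
      ring
    rw [h2, le_div_iff₀ (by linarith)] at hchain
    linarith
  nlinarith [mul_pos (show (0:ℝ) < L - 5 * d by linarith)
      (show (0:ℝ) < d₂ - 7 * d by linarith),
    mul_nonneg hd0 hd0, mul_le_mul_of_nonneg_left hd (by linarith : (0:ℝ) ≤ 2 * d),
    mul_nonneg hd0 hL0.le, mul_nonneg hd0 (by linarith : (0:ℝ) ≤ d₂)]
end

section
/- Let D be a proper domain in a real Banach space satisfying k_D(z₁,z₂) ≤ c'·log(1 + |z₁−z₂|/min{d_D(z₁),d_D(z₂)}) for all z₁,z₂ ∈ D, and let f: D → D' be an (M,C)-CQH homeomorphism onto a proper domain D'. If points z₁, z₀ ∈ D satisfy d_{D'}(f(z₀))/d_{D'}(f(z₁)) ≥ e^{2MC}·λ^{2M c'} for some λ ≥ 1, then |z₁ − z₀| ≥ (λ² − 1)·min{d_D(z₁), d_D(z₀)}; in particular min{d_D(z₁), d_D(z₀)} ≤ |z₁ − z₀|/(λ² − 1) when λ > 1. -/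
open Set Metric

/-!
Along a curve `γ` in `D'` the boundary distance `d = d_{D'} ∘ γ` is dominated by
`w(t) = d(γ 0) + ℓ(γ|[0,t])`, which grows at the rate `|γ'|`; hence
`log (d (γ 1) / d (γ 0)) ≤ log (w 1 / w 0) = ∫ |γ'| / w ≤ ∫ |γ'| / d`, so
`k_{D'}(f z₁, f z₀) ≥ log (d_{D'}(f z₀) / d_{D'}(f z₁))`. Combined with the CQH upper bound and
the growth condition this gives `2MC + 2Mc' log λ ≤ M c' log (1 + |z₁ - z₀| / m) + C`, i.e.
`λ² ≤ 1 + |z₁ - z₀| / m` for `m = min (d_D z₁) (d_D z₀)`.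
-/

open Real

section Curves

variable {E : Type*} [NormedAddCommGroup E] [NormedSpace ℝ E]

theorem bdDist_pos {D : Set E} (hD : IsOpen D) (hne : D ≠ univ) {z : E} (hz : z ∈ D) :
    0 < bdDist D z := by
  have hfr : (frontier D).Nonempty := nonempty_frontier_iff.2 ⟨⟨z, hz⟩, hne⟩
  rw [bdDist, ← isClosed_frontier.notMem_iff_infDist_pos hfr]
  exact fun h => h.2 (hD.interior_eq.symm ▸ hz)

/-- Curves that are constant outside `[0, 1]` can be concatenated without any matching
condition on the derivatives at the junction. -/
def SmoothlyJoinedIn (D : Set E) (a b : E) : Prop :=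
  ∃ γ : ℝ → E, ContDiff ℝ 1 γ ∧ MapsTo γ (Icc 0 1) D ∧
    EqOn γ (fun _ => a) (Iic 0) ∧ EqOn γ (fun _ => b) (Ici 1)

theorem SmoothlyJoinedIn.of_segment_subset {D : Set E} {a b : E} (h : segment ℝ a b ⊆ D) :
    SmoothlyJoinedIn D a b := by
  refine ⟨fun t => a + smoothTransition t • (b - a),
    contDiff_const.add (smoothTransition.contDiff.smul contDiff_const), fun t _ => h ?_,
    fun t ht => ?_, fun t ht => ?_⟩
  · rw [segment_eq_image']
    exact ⟨_, ⟨smoothTransition.nonneg t, smoothTransition.le_one t⟩, rfl⟩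
  · simp [smoothTransition.zero_of_nonpos (mem_Iic.1 ht)]
  · simp [smoothTransition.one_of_one_le (mem_Ici.1 ht)]

theorem SmoothlyJoinedIn.trans {D : Set E} {a b c : E} (h₁ : SmoothlyJoinedIn D a b)
    (h₂ : SmoothlyJoinedIn D b c) : SmoothlyJoinedIn D a c := by
  obtain ⟨γ₁, hγ₁, hD₁, ha₁, hb₁⟩ := h₁
  obtain ⟨γ₂, hγ₂, hD₂, hb₂, hc₂⟩ := h₂
  refine ⟨fun t => γ₁ (2 * t) + (γ₂ (2 * t - 1) - b), by fun_prop, fun t ht => ?_,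
    fun t ht => ?_, fun t ht => ?_⟩
  · rcases le_total t (1 / 2) with h | h
    · simpa [hb₂ (show 2 * t - 1 ≤ 0 by linarith)] using
        hD₁ ⟨by linarith [ht.1], by linarith⟩
    · simpa [hb₁ (show 1 ≤ 2 * t by linarith)] using
        hD₂ ⟨by linarith, by linarith [ht.2]⟩
  · simp [ha₁ (show 2 * t ≤ 0 by linarith [mem_Iic.1 ht]),
      hb₂ (show 2 * t - 1 ≤ 0 by linarith [mem_Iic.1 ht])]
  · simp [hb₁ (show 1 ≤ 2 * t by linarith [mem_Ici.1 ht]),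
      hc₂ (show 1 ≤ 2 * t - 1 by linarith [mem_Ici.1 ht])]

theorem IsOpen.smoothlyJoinedIn {D : Set E} (hD : IsOpen D) (hconn : IsPreconnected D)
    {a b : E} (ha : a ∈ D) (hb : b ∈ D) : SmoothlyJoinedIn D a b := by
  refine hconn.induction₂' _ (fun x hx => ?_) (fun _ _ _ _ _ _ => SmoothlyJoinedIn.trans) ha hb
  obtain ⟨r, hr, hball⟩ := Metric.isOpen_iff.1 hD x hx
  filter_upwards [nhdsWithin_le_nhds (ball_mem_nhds x hr)] with y hy
  exact ⟨.of_segment_subset ((convex_ball x r).segment_subset (mem_ball_self hr) hy |>.trans hball),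
    .of_segment_subset ((convex_ball x r).segment_subset hy (mem_ball_self hr) |>.trans hball)⟩

theorem SmoothlyJoinedIn.exists_isCurve {D : Set E} {a b : E} (h : SmoothlyJoinedIn D a b) :
    ∃ γ γ' : ℝ → E, IsCurve D γ γ' a b := by
  obtain ⟨γ, hγ, hD, ha, hb⟩ := h
  exact ⟨γ, deriv γ, hD, fun t _ => (hγ.differentiable one_ne_zero t).hasDerivAt,
    (hγ.continuous_deriv le_rfl).continuousOn, ha (mem_Iic.2 le_rfl), hb (mem_Ici.2 le_rfl)⟩

theorem norm_sub_le_integral_of_norm_deriv_le {γ γ' : ℝ → E} {g : ℝ → ℝ} {a b : ℝ}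
    (hg : Continuous g) (hγ : ∀ t ∈ Icc a b, HasDerivAt γ (γ' t) t)
    (hbound : ∀ t ∈ Icc a b, ‖γ' t‖ ≤ g t) {t : ℝ} (ht : t ∈ Icc a b) :
    ‖γ t - γ a‖ ≤ ∫ s in a..t, g s :=
  image_norm_le_of_norm_deriv_right_le_deriv_boundary (f := fun s => γ s - γ a)
    (HasDerivAt.continuousOn fun s hs => (hγ s hs).sub_const (γ a))
    (fun s hs => ((hγ s (Ico_subset_Icc_self hs)).sub_const (γ a)).hasDerivWithinAt)
    (by simp) (hg.integral_hasStrictDerivAt a · |>.hasDerivAt)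
    (fun s hs => hbound s (Ico_subset_Icc_self hs)) ht

theorem IsCurve.log_div_le_qhLen {D : Set E} {γ γ' : ℝ → E} {x y : E}
    (hc : IsCurve D γ γ' x y) (hpos : ∀ t ∈ Icc (0 : ℝ) 1, 0 < bdDist D (γ t)) :
    log (bdDist D y / bdDist D x) ≤ qhLen D γ γ' 0 1 := by
  obtain ⟨-, hderiv, hγ', rfl, rfl⟩ := hc
  set u : ℝ → ℝ := fun t => bdDist D (γ t)
  set g : ℝ → ℝ := fun s => ‖γ' (projIcc 0 1 zero_le_one s)‖
  have hg : Continuous g := hγ'.norm.comp_continuous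
    (continuous_subtype_val.comp continuous_projIcc) fun s => (projIcc 0 1 zero_le_one s).2
  have hgγ' : ∀ t ∈ Icc (0 : ℝ) 1, g t = ‖γ' t‖ := fun t ht => by simp [g, projIcc_of_mem _ ht]
  set w : ℝ → ℝ := fun t => u 0 + ∫ s in 0..t, g s
  have hw : ∀ t, HasDerivAt w (g t) t := fun t =>
    (hg.integral_hasStrictDerivAt 0 t).hasDerivAt.const_add _
  have hu_le_w : ∀ t ∈ Icc (0 : ℝ) 1, u t ≤ w t := fun t ht =>
    calc u t ≤ u 0 + ‖γ t - γ 0‖ := by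
          simpa [u, bdDist, dist_eq_norm] using infDist_le_infDist_add_dist (s := frontier D)
      _ ≤ w t := add_le_add le_rfl (norm_sub_le_integral_of_norm_deriv_le hg hderiv
          (fun s hs => (hgγ' s hs).ge) ht)
  have hw_pos : ∀ t ∈ Icc (0 : ℝ) 1, 0 < w t := fun t ht => (hpos t ht).trans_le (hu_le_w t ht)
  have hucont : ContinuousOn u (Icc 0 1) :=
    (continuous_infDist_pt _).comp_continuousOn (HasDerivAt.continuousOn hderiv)
  have hint : IntervalIntegrable (fun t => g t / w t) MeasureTheory.volume 0 1 := by
    refine ContinuousOn.intervalIntegrable ?_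
    rw [uIcc_of_le zero_le_one]
    exact hg.continuousOn.div (HasDerivAt.continuousOn fun t _ => hw t) fun t ht =>
      (hw_pos t ht).ne'
  have hftc : ∫ t in (0 : ℝ)..1, g t / w t = log (w 1) - log (w 0) :=
    intervalIntegral.integral_eq_sub_of_hasDerivAt
      (fun t ht => (hw t).log (hw_pos t (uIcc_of_le (zero_le_one' ℝ) ▸ ht)).ne') hint
  have hmono : ∫ t in (0 : ℝ)..1, g t / w t ≤ qhLen D γ γ' 0 1 := by
    refine intervalIntegral.integral_mono_on zero_le_one hint ?_ fun t ht => ?_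
    · refine ContinuousOn.intervalIntegrable ?_
      rw [uIcc_of_le zero_le_one]
      exact hγ'.norm.div hucont fun t ht => (hpos t ht).ne'
    · rw [hgγ' t ht]
      exact div_le_div_of_nonneg_left (norm_nonneg _) (hpos t ht) (hu_le_w t ht)
  have hw0 : w 0 = u 0 := by simp [w]
  rw [hw0] at hftc
  rw [log_div (hpos 1 ⟨zero_le_one, le_rfl⟩).ne' (hpos 0 ⟨le_rfl, zero_le_one⟩).ne']
  change log (u 1) - log (u 0) ≤ _
  linarith [log_le_log (hpos 1 ⟨zero_le_one, le_rfl⟩) (hu_le_w 1 ⟨zero_le_one, le_rfl⟩)]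

theorem log_bdDist_div_le_qhDist {D : Set E} (hD : IsOpen D) (hconn : IsPreconnected D)
    (hne : D ≠ univ) {a b : E} (ha : a ∈ D) (hb : b ∈ D) :
    log (bdDist D b / bdDist D a) ≤ qhDist D a b := by
  obtain ⟨γ, γ', hc⟩ := (hD.smoothlyJoinedIn hconn ha hb).exists_isCurve
  refine le_csInf ⟨_, γ, γ', hc, rfl⟩ ?_
  rintro _ ⟨γ, γ', hc, rfl⟩
  exact hc.log_div_le_qhLen fun t ht => bdDist_pos hD hne (hc.1 t ht)

end Curves

theorem sq_le_of_exp_mul_rpow_le_of_log_le {M C c' lam r q x : ℝ} (hM : 1 ≤ M) (hC : 0 ≤ C)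
    (hc' : 0 < c') (hlam : 0 < lam) (hx : 0 < x)
    (hr : exp (2 * M * C) * lam ^ (2 * M * c') ≤ r) (hlog : log r ≤ M * q + C)
    (hq : q ≤ c' * log x) : lam ^ 2 ≤ x := by
  have hr' : 2 * M * C + 2 * M * c' * log lam ≤ log r := by
    have := log_le_log (by positivity) hr
    rwa [log_mul (exp_pos _).ne' (rpow_pos_of_pos hlam _).ne', log_exp, log_rpow hlam] at this
  have hMq : M * q ≤ M * (c' * log x) := mul_le_mul_of_nonneg_left hq (by linarith)
  have hMc' : 0 < M * c' := by positivity
  have h : M * c' * log (lam ^ 2) ≤ M * c' * log x := by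
    rw [log_pow]
    push_cast
    nlinarith
  exact (log_le_log_iff (by positivity) hx).1 (le_of_mul_le_mul_left h hMc')

theorem sub_one_mul_le_of_le_one_add_div {a d m : ℝ} (hd : 0 ≤ d) (hm : 0 ≤ m)
    (h : a ≤ 1 + d / m) : (a - 1) * m ≤ d := by
  rcases hm.eq_or_lt with rfl | hm
  · simpa using hd
  · rw [← le_div_iff₀ hm]
    linarith

theorem stmt16_general {E : Type*} [NormedAddCommGroup E] [NormedSpace ℝ E]
    {E' : Type*} [NormedAddCommGroup E'] [NormedSpace ℝ E']
    (D : Set E) (D' : Set E')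
    (hD'open : IsOpen D') (hD'conn : IsConnected D') (hD'proper : D' ≠ univ)
    (c' M C : ℝ) (hc' : 1 ≤ c') (hM : 1 ≤ M) (hC : 0 ≤ C)
    (hgrowth : ∀ z₁ ∈ D, ∀ z₂ ∈ D, qhDist D z₁ z₂ ≤
      c' * Real.log (1 + dist z₁ z₂ / min (bdDist D z₁) (bdDist D z₂)))
    (f : E → E') (hf : IsHomeoOn f D D') (hcqh : IsCQH M C D D' f)
    (z₁ z₀ : E) (hz₁ : z₁ ∈ D) (hz₀ : z₀ ∈ D)
    (lam : ℝ) (hlam : 1 ≤ lam)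
    (hratio : Real.exp (2 * M * C) * lam ^ (2 * M * c') ≤
      bdDist D' (f z₀) / bdDist D' (f z₁)) :
    (lam ^ 2 - 1) * min (bdDist D z₁) (bdDist D z₀) ≤ dist z₁ z₀ ∧
      (1 < lam → min (bdDist D z₁) (bdDist D z₀) ≤ dist z₁ z₀ / (lam ^ 2 - 1)) := by
  have hm : 0 ≤ min (bdDist D z₁) (bdDist D z₀) := le_min infDist_nonneg infDist_nonneg
  have hD'log := log_bdDist_div_le_qhDist hD'open hD'conn.isPreconnected hD'proper
    (hf.2.2.1 ▸ mem_image_of_mem f hz₁) (hf.2.2.1 ▸ mem_image_of_mem f hz₀)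
  have hlam_sq : lam ^ 2 ≤ 1 + dist z₁ z₀ / min (bdDist D z₁) (bdDist D z₀) :=
    sq_le_of_exp_mul_rpow_le_of_log_le hM hC (by linarith) (by linarith) (by positivity) hratio
      (hD'log.trans (hcqh z₁ hz₁ z₀ hz₀).2) (hgrowth z₁ hz₁ z₀ hz₀)
  have hmain := sub_one_mul_le_of_le_one_add_div dist_nonneg hm hlam_sq
  refine ⟨hmain, fun hlam' => ?_⟩
  rw [le_div_iff₀ (by nlinarith), mul_comm]
  exact hmain

/-- if `D` satisfies the quasihyperbolic growth condition with constant `c'`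
and `f` is `(M,C)`-CQH onto `D'`, then `d_{D'}(f(z₀))/d_{D'}(f(z₁)) ≥ e^{2MC}·λ^{2Mc'}` with
`λ ≥ 1` implies `|z₁ - z₀| ≥ (λ² - 1)·min{d_D(z₁), d_D(z₀)}`; in particular, when `λ > 1`,
`min{d_D(z₁), d_D(z₀)} ≤ |z₁ - z₀|/(λ² - 1)`. -/
theorem stmt16 {E : Type*} [NormedAddCommGroup E] [NormedSpace ℝ E] [CompleteSpace E]
    {E' : Type*} [NormedAddCommGroup E'] [NormedSpace ℝ E'] [CompleteSpace E']
    (D : Set E) (D' : Set E')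
    (hDopen : IsOpen D) (hDconn : IsConnected D) (hDproper : D ≠ univ)
    (hD'open : IsOpen D') (hD'conn : IsConnected D') (hD'proper : D' ≠ univ)
    (c' M C : ℝ) (hc' : 1 ≤ c') (hM : 1 ≤ M) (hC : 0 ≤ C)
    (hgrowth : ∀ z₁ ∈ D, ∀ z₂ ∈ D, qhDist D z₁ z₂ ≤
      c' * Real.log (1 + dist z₁ z₂ / min (bdDist D z₁) (bdDist D z₂)))
    (f : E → E') (hf : IsHomeoOn f D D') (hcqh : IsCQH M C D D' f)
    (z₁ z₀ : E) (hz₁ : z₁ ∈ D) (hz₀ : z₀ ∈ D)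
    (lam : ℝ) (hlam : 1 ≤ lam)
    (hratio : Real.exp (2 * M * C) * lam ^ (2 * M * c') ≤
      bdDist D' (f z₀) / bdDist D' (f z₁)) :
    (lam ^ 2 - 1) * min (bdDist D z₁) (bdDist D z₀) ≤ dist z₁ z₀ ∧
      (1 < lam → min (bdDist D z₁) (bdDist D z₀) ≤ dist z₁ z₀ / (lam ^ 2 - 1)) :=
  stmt16_general D D' hD'open hD'conn hD'proper c' M C hc' hM hC hgrowth f hf hcqh z₁ z₀ hz₁ hz₀ lam
    hlam hratio
end
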